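/- String specialization identity (Hall–Littlewood case): let λ = (λ_1 ≥ ⋯ ≥ λ_m > 0) be a partition of k with m parts, let 0 < t < 1 and let w_1, ..., w_m be complex numbers such that all denominators below are nonzero. Define (z_1,...,z_k) = (w_1, t w_1, ..., t^{λ_1−1} w_1, ..., w_m, ..., t^{λ_m−1} w_m). Then ∏_{1 ≤ a < b ≤ k} (1 − t z_a z_b)/(1 − z_a z_b) · ∏_{i=1}^k (1 − t z_i^2)/(1 − z_i^2) = ∏_{1 ≤ a < b ≤ m} [(t^{λ_a} w_a w_b; t)_∞ (t^{λ_b} w_a w_b; t)_∞]/[(w_a w_b; t)_∞ (t^{λ_a+λ_b} w_a w_b; t)_∞] · ∏_{j=1}^m (t^{λ_j} w_j^2; t)_∞/(w_j^2; t)_∞ · (t w_j^2; t^2)_∞/(t^{2λ_j+1} w_j^2; t^2)_∞. -/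

import Mathlib

/-!
The two products on the left run over the unordered pairs `{a, b}` of indices, diagonal
included, so together they are a product over `Sym2 (Fin k)`. Such a product is invariant
under relabelling, and along the strings it splits into a product over pairs of distinct
strings and a product over single strings. For the strings of `w_a` and `w_b` (possibly
`a = b`) the factor of the pair `t^u w_a, t^v w_b` is `(1 - t^(u+v+1) W) / (1 - t^(u+v) W)`
with `W = w_a w_b`, so the product telescopes in `v`, leaving ratios of finite
q-Pochhammer symbols; these become the stated ratios of infinite ones through
`(a; t)_∞ = (a; t)_n (t^n a; t)_∞`, together with `(a; t)_(2n) = (a; t²)_n (t a; t²)_n`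
for a single string.
-/

/-- The infinite q-Pochhammer symbol `(a; q)_∞ = ∏_{i=0}^∞ (1 − a q^i)`. -/
noncomputable def qPochInf (a q : ℂ) : ℂ := ∏' i : ℕ, (1 - a * q^i)

open Finset

theorem Finset.prod_range_div₀ {G : Type*} [CommGroupWithZero G] (f : ℕ → G) {n : ℕ}
    (hf : ∀ i ≤ n, f i ≠ 0) : ∏ i ∈ range n, f (i + 1) / f i = f n / f 0 := by
  induction n with
  | zero => simp [div_self (hf 0 le_rfl)]
  | succ n ih =>
    rw [prod_range_succ, ih fun i hi => hf i (by omega)]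
    field_simp [hf n (by omega)]

theorem Finset.prod_sym2_eq_prod_prod_filter_le {α M : Type*} [LinearOrder α] [CommMonoid M]
    (s : Finset α) (g : Sym2 α → M) :
    ∏ x ∈ s.sym2, g x = ∏ i ∈ s, ∏ j ∈ s with i ≤ j, g s(i, j) := by
  calc ∏ x ∈ s.sym2, g x = ∏ p ∈ s ×ˢ s with p.1 ≤ p.2, g s(p.1, p.2) := by
        refine prod_nbij' (fun x => (x.inf, x.sup)) (fun p => s(p.1, p.2)) ?_ ?_ ?_ ?_ ?_
        · intro x
          induction x with | _ i j => rcases le_total i j with h | h <;> simp [h, and_comm]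
        · rintro ⟨i, j⟩
          simp +contextual
        · intro x
          induction x with | _ i j => rcases le_total i j with h | h <;> simp [h, Sym2.eq_swap]
        · rintro ⟨i, j⟩
          simp +contextual
        · intro x
          induction x with | _ i j => rcases le_total i j with h | h <;> simp [h, Sym2.eq_swap]
    _ = _ := by
        rw [prod_filter, prod_product]
        exact prod_congr rfl fun i _ => (prod_filter _ _).symm

theorem Fin.prod_sym2_map_val_eq_prod_Ico {M : Type*} [CommMonoid M] (n : ℕ)
    (g : Sym2 ℕ → M) :
    ∏ x : Sym2 (Fin n), g (x.map Fin.val) = ∏ u ∈ range n, ∏ v ∈ Ico u n, g s(u, v) := by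
  calc ∏ x : Sym2 (Fin n), g (x.map Fin.val) = ∏ x ∈ (range n).sym2, g x := by
        rw [← Nat.Iio_eq_range, ← Fin.map_valEmbedding_univ, sym2_map, prod_map, sym2_univ]
        rfl
    _ = _ := by
        rw [prod_sym2_eq_prod_prod_filter_le]
        refine prod_congr rfl fun u _ => prod_congr ?_ fun _ _ => rfl
        ext
        simp
        omega

namespace Fintype

variable {α β M : Type*} [CommMonoid M]

theorem prod_sym2_eq_prod_Ioi_mul_prod_diag [Fintype α] [LinearOrder α] [LocallyFiniteOrderTop α]
    (g : Sym2 α → M) :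
    ∏ x, g x = (∏ i, ∏ j ∈ Ioi i, g s(i, j)) * ∏ i, g s(i, i) := by
  rw [← sym2_univ, prod_sym2_eq_prod_prod_filter_le, ← prod_mul_distrib]
  refine Finset.prod_congr rfl fun i _ => ?_
  rw [filter_le_eq_Ici, Ici_eq_cons_Ioi, prod_cons, mul_comm]

theorem prod_sym2_map_equiv [Fintype α] [Fintype β] (e : α ≃ β)
    (g : Sym2 β → M) : ∏ x : Sym2 α, g (x.map e) = ∏ x, g x :=
  prod_bijective _
    ⟨Sym2.map.injective e.injective, fun y => ⟨y.map e.symm, by simp [Sym2.map_map]⟩⟩ _ _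
    fun _ => rfl

end Fintype

namespace Sym2

variable {ι M : Type*} {β : ι → Type*} [CommMonoid M] [Fintype ι] [DecidableEq ι]
  [∀ i, Fintype (β i)]

theorem prod_map_fst_eq_mk_of_ne (g : Sym2 (Σ i, β i) → M) {i j : ι} (hij : i ≠ j) :
    ∏ x with x.map Sigma.fst = s(i, j), g x =
      ∏ a : β i, ∏ b : β j, g s(⟨i, a⟩, ⟨j, b⟩) := by
  rw [← Fintype.prod_prod_type']
  symm
  refine prod_nbij (fun p => s(⟨i, p.1⟩, ⟨j, p.2⟩)) (by simp) ?_ ?_ fun _ _ => rfl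
  · rintro ⟨a, b⟩ - ⟨a', b'⟩ - h
    simp_all
  · intro x hx
    induction x with | _ p q =>
    obtain ⟨k, a⟩ := p
    obtain ⟨l, b⟩ := q
    simp only [coe_filter, mem_univ, true_and, Set.mem_ofPred_eq, map_mk, eq_iff] at hx
    rcases hx with ⟨rfl, rfl⟩ | ⟨rfl, rfl⟩
    · exact ⟨(a, b), by simp⟩
    · exact ⟨(b, a), by simp [eq_swap]⟩

theorem prod_map_fst_eq_diag (g : Sym2 (Σ i, β i) → M) (i : ι) :
    ∏ x with x.map Sigma.fst = s(i, i), g x = ∏ x : Sym2 (β i), g (x.map (Sigma.mk i)) := by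
  symm
  refine prod_nbij (map (Sigma.mk i)) ?_ (map.injective sigma_mk_injective).injOn ?_
    fun _ _ => rfl
  · intro x _
    induction x with | _ a b => simp
  · intro x hx
    induction x with | _ p q =>
    obtain ⟨k, a⟩ := p
    obtain ⟨l, b⟩ := q
    simp only [coe_filter, mem_univ, true_and, Set.mem_ofPred_eq, map_mk, eq_iff] at hx
    obtain ⟨rfl, rfl⟩ : k = i ∧ l = i := by tauto
    exact ⟨s(a, b), by simp⟩

end Sym2

theorem Fintype.prod_sym2_sigma {ι M : Type*} {β : ι → Type*} [CommMonoid M] [Fintype ι]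
    [LinearOrder ι] [LocallyFiniteOrderTop ι] [∀ i, Fintype (β i)]
    (g : Sym2 (Σ i, β i) → M) :
    ∏ x, g x = (∏ i, ∏ j ∈ Ioi i, ∏ a : β i, ∏ b : β j, g s(⟨i, a⟩, ⟨j, b⟩)) *
      ∏ i, ∏ x : Sym2 (β i), g (x.map (Sigma.mk i)) := by
  rw [← Finset.prod_fiberwise univ (Sym2.map Sigma.fst) g, prod_sym2_eq_prod_Ioi_mul_prod_diag]
  congr 1
  · exact Finset.prod_congr rfl fun i _ => Finset.prod_congr rfl fun j hj =>
      Sym2.prod_map_fst_eq_mk_of_ne g (mem_Ioi.mp hj).ne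
  · exact Finset.prod_congr rfl fun i _ => Sym2.prod_map_fst_eq_diag g i

noncomputable def qPoch (a q : ℂ) (n : ℕ) : ℂ := ∏ i ∈ range n, (1 - a * q ^ i)

section

variable {q : ℂ}

theorem multipliable_one_sub_mul_pow (hq : ‖q‖ < 1) (a : ℂ) :
    Multipliable fun i : ℕ => 1 - a * q ^ i := by
  simp_rw [sub_eq_add_neg]
  refine multipliable_one_add_of_summable ?_
  simpa [norm_mul, norm_pow] using
    (summable_geometric_of_lt_one (norm_nonneg q) hq).mul_left ‖a‖

theorem qPochInf_eq_qPoch_mul (hq : ‖q‖ < 1) (a : ℂ) (n : ℕ) :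
    qPochInf a q = qPoch a q n * qPochInf (q ^ n * a) q := by
  have h : Multipliable fun i => 1 - a * q ^ (i + n) :=
    (multipliable_one_sub_mul_pow hq (q ^ n * a)).congr fun i => by ring
  rw [qPochInf, ← Multipliable.prod_mul_tprod_nat_mul' (f := fun i => 1 - a * q ^ i) h]
  exact congrArg _ (tprod_congr fun i => by ring)

theorem qPoch_add (a q : ℂ) (m n : ℕ) :
    qPoch a q (m + n) = qPoch a q m * qPoch (q ^ m * a) q n := by
  rw [qPoch, prod_range_add]
  congr 1
  exact prod_congr rfl fun i _ => by ring

theorem qPoch_two_mul (a q : ℂ) (n : ℕ) :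
    qPoch a q (2 * n) = qPoch a (q ^ 2) n * qPoch (q * a) (q ^ 2) n := by
  induction n with
  | zero => simp [qPoch]
  | succ n ih =>
    rw [show 2 * (n + 1) = 2 * n + 1 + 1 by ring, qPoch, prod_range_succ, prod_range_succ,
      ← qPoch, ih]
    simp only [qPoch, prod_range_succ]
    ring

variable {a : ℂ}

theorem qPoch_ne_zero_of_qPochInf_ne_zero (hq : ‖q‖ < 1) (h : qPochInf a q ≠ 0) (n : ℕ) :
    qPoch a q n ≠ 0 :=
  left_ne_zero_of_mul (qPochInf_eq_qPoch_mul hq a n ▸ h)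

theorem qPochInf_pow_mul_ne_zero (hq : ‖q‖ < 1) (h : qPochInf a q ≠ 0) (n : ℕ) :
    qPochInf (q ^ n * a) q ≠ 0 :=
  right_ne_zero_of_mul (qPochInf_eq_qPoch_mul hq a n ▸ h)

noncomputable def littlewoodFactor (q : ℂ) : Sym2 ℂ → ℂ :=
  Sym2.lift ⟨fun x y => (1 - q * x * y) / (1 - x * y), fun x y => by ring⟩

theorem prod_range_littlewoodFactor {x y : ℂ} {n : ℕ} (h : qPoch (x * y) q (n + 1) ≠ 0) :
    ∏ v ∈ range n, littlewoodFactor q s(x, q ^ v * y) = (1 - x * y * q ^ n) / (1 - x * y) := by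
  have hf : ∀ i ≤ n, 1 - x * y * q ^ i ≠ 0 := fun i hi =>
    prod_ne_zero_iff.mp h i (mem_range.mpr (Nat.lt_succ_of_le hi))
  have := prod_range_div₀ (fun i => 1 - x * y * q ^ i) hf
  rw [pow_zero, mul_one] at this
  rw [← this]
  refine prod_congr rfl fun v _ => ?_
  simp only [littlewoodFactor, Sym2.lift_mk]
  ring

theorem prod_littlewoodFactor_pair (hq : ‖q‖ < 1) (c d : ℂ) (la lb : ℕ)
    (h : qPochInf (c * d) q ≠ 0) (h' : qPochInf (q ^ (la + lb) * (c * d)) q ≠ 0) :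
    ∏ a : Fin la, ∏ b : Fin lb, littlewoodFactor q s(q ^ (a : ℕ) * c, q ^ (b : ℕ) * d) =
      qPochInf (q ^ la * (c * d)) q * qPochInf (q ^ lb * (c * d)) q /
        (qPochInf (c * d) q * qPochInf (q ^ (la + lb) * (c * d)) q) := by
  calc _ = ∏ u ∈ range la, ∏ v ∈ range lb, littlewoodFactor q s(q ^ u * c, q ^ v * d) := by
          simp only [prod_range]
    _ = qPoch (q ^ lb * (c * d)) q la / qPoch (c * d) q la := by
          rw [qPoch, qPoch, ← prod_div_distrib]
          refine prod_congr rfl fun u _ => ?_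
          rw [prod_range_littlewoodFactor]
          · ring
          · rw [show q ^ u * c * d = q ^ u * (c * d) by ring]
            exact qPoch_ne_zero_of_qPochInf_ne_zero hq (qPochInf_pow_mul_ne_zero hq h u) _
    _ = _ := by
          rw [qPochInf_eq_qPoch_mul hq (c * d) la, qPochInf_eq_qPoch_mul hq (q ^ lb * (c * d)) la,
            show q ^ la * (q ^ lb * (c * d)) = q ^ (la + lb) * (c * d) by ring]
          have hP := qPoch_ne_zero_of_qPochInf_ne_zero hq h la
          have hQ := qPochInf_pow_mul_ne_zero hq h la
          rw [div_eq_div_iff hP (mul_ne_zero (mul_ne_zero hP hQ) h')]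
          ring

theorem prod_Ico_littlewoodFactor (hq : ‖q‖ < 1) {c : ℂ} (h : qPochInf (c ^ 2) q ≠ 0)
    {u l : ℕ} (hul : u ≤ l) :
    ∏ v ∈ Ico u l, littlewoodFactor q s(q ^ u * c, q ^ v * c) =
      (1 - q ^ l * c ^ 2 * q ^ u) / (1 - c ^ 2 * (q ^ 2) ^ u) := by
  obtain ⟨r, rfl⟩ := Nat.exists_eq_add_of_le hul
  have hx : q ^ u * c * (q ^ u * c) = q ^ (2 * u) * c ^ 2 := by ring
  rw [prod_Ico_eq_prod_range, Nat.add_sub_cancel_left]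
  simp_rw [pow_add, mul_assoc (q ^ u) (q ^ _), mul_left_comm (q ^ u) (q ^ _) c]
  rw [prod_range_littlewoodFactor, hx]
  · ring
  · rw [hx]
    exact qPoch_ne_zero_of_qPochInf_ne_zero hq (qPochInf_pow_mul_ne_zero hq h _) _

theorem prod_littlewoodFactor_string (hq : ‖q‖ < 1) (c : ℂ) (l : ℕ)
    (h : qPochInf (c ^ 2) q ≠ 0) (h' : qPochInf (q ^ (2 * l + 1) * c ^ 2) (q ^ 2) ≠ 0) :
    ∏ x : Sym2 (Fin l), littlewoodFactor q (x.map fun a : Fin l => q ^ (a : ℕ) * c) =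
      qPochInf (q ^ l * c ^ 2) q / qPochInf (c ^ 2) q *
        (qPochInf (q * c ^ 2) (q ^ 2) / qPochInf (q ^ (2 * l + 1) * c ^ 2) (q ^ 2)) := by
  have hq2 : ‖q ^ 2‖ < 1 := by
    rw [norm_pow]
    exact pow_lt_one₀ (norm_nonneg _) hq two_ne_zero
  have hP := qPoch_ne_zero_of_qPochInf_ne_zero hq h
  have hsplit := qPoch_two_mul (c ^ 2) q l
  calc _ = ∏ x : Sym2 (Fin l), littlewoodFactor q ((x.map Fin.val).map fun u => q ^ u * c) := by
          simp only [Sym2.map_map]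
          rfl
    _ = ∏ u ∈ range l, ∏ v ∈ Ico u l, littlewoodFactor q s(q ^ u * c, q ^ v * c) :=
          Fin.prod_sym2_map_val_eq_prod_Ico l fun x => littlewoodFactor q (x.map fun u => q ^ u * c)
    _ = qPoch (q ^ l * c ^ 2) q l / qPoch (c ^ 2) (q ^ 2) l := by
          rw [qPoch, qPoch, ← prod_div_distrib]
          exact prod_congr rfl fun u hu =>
            prod_Ico_littlewoodFactor hq h (mem_range.mp hu).le
    _ = qPoch (q * c ^ 2) (q ^ 2) l / qPoch (c ^ 2) q l := by
          rw [div_eq_div_iff (left_ne_zero_of_mul (hsplit ▸ hP (2 * l))) (hP l)]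
          -- split `(c²; q)_(2l)` into its first and last `l` factors, and into even and odd ones
          linear_combination (qPoch_add (c ^ 2) q l l).symm.trans (two_mul l ▸ hsplit)
    _ = _ := by
          rw [qPochInf_eq_qPoch_mul hq (c ^ 2) l, qPochInf_eq_qPoch_mul hq2 (q * c ^ 2) l,
            show (q ^ 2) ^ l * (q * c ^ 2) = q ^ (2 * l + 1) * c ^ 2 by ring]
          rw [mul_div_assoc, div_self h', mul_one,
            div_mul_cancel_right₀ (qPochInf_pow_mul_ne_zero hq h l), inv_mul_eq_div]

end

theorem string_specialization_HallLittlewood_general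
    {m k : ℕ} (lam : Fin m → ℕ) (t : ℝ) (ht0 : 0 < t) (ht1 : t < 1)
    (w : Fin m → ℂ)
    (z : Fin k → ℂ) (e : Fin k ≃ (Σ a : Fin m, Fin (lam a)))
    (hz : ∀ i, z i = (t:ℂ)^(((e i).2 : ℕ)) * w (e i).1)
    (hden3 : ∀ a b : Fin m, a ≠ b → qPochInf (w a * w b) (t:ℂ) ≠ 0)
    (hden4 : ∀ a b : Fin m, a ≠ b →
      qPochInf ((t:ℂ)^(lam a + lam b) * (w a * w b)) (t:ℂ) ≠ 0)
    (hden5 : ∀ j, qPochInf ((w j)^2) (t:ℂ) ≠ 0)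
    (hden6 : ∀ j, qPochInf ((t:ℂ)^(2 * lam j + 1) * (w j)^2) ((t:ℂ)^2) ≠ 0) :
    (∏ i : Fin k, ∏ j ∈ Finset.Ioi i, (1 - (t:ℂ) * z i * z j) / (1 - z i * z j)) *
        ∏ i : Fin k, (1 - (t:ℂ) * (z i)^2) / (1 - (z i)^2) =
      (∏ a : Fin m, ∏ b ∈ Finset.Ioi a,
          (qPochInf ((t:ℂ)^(lam a) * (w a * w b)) (t:ℂ) *
              qPochInf ((t:ℂ)^(lam b) * (w a * w b)) (t:ℂ)) /
            (qPochInf (w a * w b) (t:ℂ) *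
              qPochInf ((t:ℂ)^(lam a + lam b) * (w a * w b)) (t:ℂ))) *
        ∏ j : Fin m,
          (qPochInf ((t:ℂ)^(lam j) * (w j)^2) (t:ℂ) / qPochInf ((w j)^2) (t:ℂ)) *
            (qPochInf ((t:ℂ) * (w j)^2) ((t:ℂ)^2) /
              qPochInf ((t:ℂ)^(2 * lam j + 1) * (w j)^2) ((t:ℂ)^2)) := by
  have hq : ‖(t : ℂ)‖ < 1 := by rwa [Complex.norm_real, Real.norm_of_nonneg ht0.le]
  let ζ : (Σ a : Fin m, Fin (lam a)) → ℂ := fun p => (t : ℂ) ^ (p.2 : ℕ) * w p.1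
  have hzζ : z = ζ ∘ e := funext hz
  calc _ = ∏ x : Sym2 (Fin k), littlewoodFactor t (x.map z) := by
        simp only [Fintype.prod_sym2_eq_prod_Ioi_mul_prod_diag, Sym2.map_mk, littlewoodFactor,
          Sym2.lift_mk, sq, mul_assoc]
    _ = ∏ x : Sym2 (Σ a : Fin m, Fin (lam a)), littlewoodFactor t (x.map ζ) := by
        simp only [hzζ, ← Sym2.map_map]
        exact Fintype.prod_sym2_map_equiv e fun x => littlewoodFactor t (x.map ζ)
    _ = _ := by
        rw [Fintype.prod_sym2_sigma]
        congr 1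
        · exact prod_congr rfl fun a _ => prod_congr rfl fun b hb =>
            prod_littlewoodFactor_pair hq (w a) (w b) (lam a) (lam b)
              (hden3 a b (mem_Ioi.mp hb).ne) (hden4 a b (mem_Ioi.mp hb).ne)
        · refine prod_congr rfl fun j _ => ?_
          simp only [Sym2.map_map]
          exact prod_littlewoodFactor_string hq (w j) (lam j) (hden5 j) (hden6 j)

/-- String specialization identity (Hall–Littlewood case): let `λ = (λ_1 ≥ ⋯ ≥ λ_m > 0)` be a
partition of `k`, `0 < t < 1`, and let `(z_1,...,z_k)` be the concatenation
`(w_1, t w_1, ..., t^{λ_1−1} w_1, ..., w_m, ..., t^{λ_m−1} w_m)` (encoded via a bijection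
`e : Fin k ≃ Σ a, Fin (λ a)`).  Then
`∏_{a<b≤k} (1 − t z_a z_b)/(1 − z_a z_b) · ∏_i (1 − t z_i²)/(1 − z_i²)
 = ∏_{a<b≤m} (t^{λ_a} w_a w_b;t)_∞ (t^{λ_b} w_a w_b;t)_∞ /
     ((w_a w_b;t)_∞ (t^{λ_a+λ_b} w_a w_b;t)_∞)
   · ∏_j (t^{λ_j} w_j²;t)_∞/(w_j²;t)_∞ · (t w_j²;t²)_∞/(t^{2λ_j+1} w_j²;t²)_∞`. -/
theorem string_specialization_HallLittlewood
    {m k : ℕ} (lam : Fin m → ℕ) (t : ℝ) (ht0 : 0 < t) (ht1 : t < 1)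
    (w : Fin m → ℂ)
    (hpos : ∀ a, 0 < lam a)
    (hmono : ∀ a b : Fin m, a ≤ b → lam b ≤ lam a)
    (hk : ∑ a, lam a = k)
    (z : Fin k → ℂ) (e : Fin k ≃ (Σ a : Fin m, Fin (lam a)))
    (hz : ∀ i, z i = (t:ℂ)^(((e i).2 : ℕ)) * w (e i).1)
    (hden1 : ∀ i j : Fin k, i ≠ j → 1 - z i * z j ≠ 0)
    (hden2 : ∀ i, 1 - (z i)^2 ≠ 0)
    (hden3 : ∀ a b : Fin m, a ≠ b → qPochInf (w a * w b) (t:ℂ) ≠ 0)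
    (hden4 : ∀ a b : Fin m, a ≠ b →
      qPochInf ((t:ℂ)^(lam a + lam b) * (w a * w b)) (t:ℂ) ≠ 0)
    (hden5 : ∀ j, qPochInf ((w j)^2) (t:ℂ) ≠ 0)
    (hden6 : ∀ j, qPochInf ((t:ℂ)^(2 * lam j + 1) * (w j)^2) ((t:ℂ)^2) ≠ 0) :
    (∏ i : Fin k, ∏ j ∈ Finset.Ioi i, (1 - (t:ℂ) * z i * z j) / (1 - z i * z j)) *
        ∏ i : Fin k, (1 - (t:ℂ) * (z i)^2) / (1 - (z i)^2) =
      (∏ a : Fin m, ∏ b ∈ Finset.Ioi a,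
          (qPochInf ((t:ℂ)^(lam a) * (w a * w b)) (t:ℂ) *
              qPochInf ((t:ℂ)^(lam b) * (w a * w b)) (t:ℂ)) /
            (qPochInf (w a * w b) (t:ℂ) *
              qPochInf ((t:ℂ)^(lam a + lam b) * (w a * w b)) (t:ℂ))) *
        ∏ j : Fin m,
          (qPochInf ((t:ℂ)^(lam j) * (w j)^2) (t:ℂ) / qPochInf ((w j)^2) (t:ℂ)) *
            (qPochInf ((t:ℂ) * (w j)^2) ((t:ℂ)^2) /
              qPochInf ((t:ℂ)^(2 * lam j + 1) * (w j)^2) ((t:ℂ)^2)) :=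
  string_specialization_HallLittlewood_general lam t ht0 ht1 w z e hz hden3 hden4 hden5 hden6
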